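/- arXiv:1805.11803 — 2 statements merged into one kernel-verified Lean document; each statement's English description precedes it below -/
import Mathlib

section
/- Let G be a simple graph with n vertices, m edges and first Zagreb index M₁(G). Then s_Q(G) ≥ (4/n)·sqrt(n·M₁(G) - 4m²). -/
open Matrix

/-- The spread of a Hermitian real matrix: largest minus smallest eigenvalue. -/
noncomputable def spread {n : ℕ} {A : Matrix (Fin n) (Fin n) ℝ} (hA : A.IsHermitian) : ℝ :=
  (⨆ i, hA.eigenvalues i) - ⨅ i, hA.eigenvalues i

/-- The signless Laplacian matrix Q = D + A of a simple graph. -/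
noncomputable def signlessLaplacian {n : ℕ} (G : SimpleGraph (Fin n)) [DecidableRel G.Adj] :
    Matrix (Fin n) (Fin n) ℝ :=
  Matrix.diagonal (fun i => (G.degree i : ℝ)) + G.adjMatrix ℝ

/-!
If the spectrum of a real symmetric matrix `A` lies in `[a, b]` (at best between its extreme
eigenvalues), then `(b - A)(A - a)` is positive semidefinite. Evaluating its quadratic form at `x` and completing the square gives
`4 ((x ⬝ x)(Ax ⬝ Ax) - (x ⬝ Ax)²) ≤ ((x ⬝ x)(b - a))²`. For the signless Laplacian and the
all-ones vector, `Q 1` is twice the degree vector, so `1 ⬝ Q1 = 4m` and `Q1 ⬝ Q1 = 4 M₁`.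
-/

section Spectrum

variable {m : Type*} [Fintype m] [DecidableEq m]

open scoped MatrixOrder in
theorem Matrix.IsHermitian.posSemidef_smul_one_sub_mul_sub_smul_one {A : Matrix m m ℝ}
    (hA : A.IsHermitian) {a b : ℝ} (ha : ∀ i, a ≤ hA.eigenvalues i)
    (hb : ∀ i, hA.eigenvalues i ≤ b) :
    ((b • 1 - A) * (A - a • 1)).PosSemidef := by
  rw [← nonneg_iff_posSemidef]
  have hcfc : (b • 1 - A) * (A - a • 1) = cfc (fun t => (b - t) * (t - a)) A := by
    rw [cfc_mul _ _ A, cfc_sub _ _ A, cfc_sub _ _ A, cfc_const b A, cfc_const a A, cfc_id' ℝ A]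
    simp [Algebra.algebraMap_eq_smul_one]
  rw [hcfc]
  refine cfc_nonneg fun t ht => ?_
  obtain ⟨i, rfl⟩ := hA.spectrum_real_eq_range_eigenvalues ▸ ht
  exact mul_nonneg (sub_nonneg.2 (hb i)) (sub_nonneg.2 (ha i))

theorem Matrix.IsSymm.dotProduct_smul_one_sub_mul_sub_smul_one_mulVec {A : Matrix m m ℝ}
    (hA : A.IsSymm) (a b : ℝ) (x : m → ℝ) :
    x ⬝ᵥ ((b • 1 - A) * (A - a • 1)) *ᵥ x
      = (a + b) * (x ⬝ᵥ A *ᵥ x) - a * b * (x ⬝ᵥ x) - A *ᵥ x ⬝ᵥ A *ᵥ x := by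
  have hAA : x ⬝ᵥ A *ᵥ (A *ᵥ x) = A *ᵥ x ⬝ᵥ A *ᵥ x := by
    rw [dotProduct_mulVec, ← mulVec_transpose, hA.eq]
  simp only [← mulVec_mulVec, sub_mulVec, mulVec_sub, smul_mulVec, mulVec_smul, one_mulVec,
    dotProduct_sub, dotProduct_smul, smul_eq_mul, hAA]
  ring

theorem Matrix.IsHermitian.four_mul_sub_sq_le_sq_mul_sub {A : Matrix m m ℝ}
    (hA : A.IsHermitian) {a b : ℝ} (ha : ∀ i, a ≤ hA.eigenvalues i)
    (hb : ∀ i, hA.eigenvalues i ≤ b) (x : m → ℝ) :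
    4 * ((x ⬝ᵥ x) * (A *ᵥ x ⬝ᵥ A *ᵥ x) - (x ⬝ᵥ A *ᵥ x) ^ 2) ≤ ((x ⬝ᵥ x) * (b - a)) ^ 2 := by
  have hform := (hA.posSemidef_smul_one_sub_mul_sub_smul_one ha hb).dotProduct_mulVec_nonneg x
  rw [star_trivial, (isHermitian_iff_isSymm.mp hA).dotProduct_smul_one_sub_mul_sub_smul_one_mulVec]
    at hform
  have hxx : 0 ≤ x ⬝ᵥ x := dotProduct_self_star_nonneg x
  nlinarith [mul_nonneg hxx hform, sq_nonneg ((x ⬝ᵥ x) * (a + b) - 2 * (x ⬝ᵥ A *ᵥ x))]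

end Spectrum

section Spread

variable {n : ℕ} {A : Matrix (Fin n) (Fin n) ℝ}

theorem Matrix.IsHermitian.iInf_eigenvalues_le (hA : A.IsHermitian) (i : Fin n) :
    ⨅ j, hA.eigenvalues j ≤ hA.eigenvalues i :=
  ciInf_le (Set.finite_range _).bddBelow i

theorem Matrix.IsHermitian.eigenvalues_le_iSup (hA : A.IsHermitian) (i : Fin n) :
    hA.eigenvalues i ≤ ⨆ j, hA.eigenvalues j :=
  le_ciSup (Set.finite_range _).bddAbove i

theorem spread_nonneg (hA : A.IsHermitian) : 0 ≤ spread hA := by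
  rcases isEmpty_or_nonempty (Fin n) with hn | ⟨⟨i⟩⟩
  · simp [spread]
  · exact sub_nonneg.2 ((hA.iInf_eigenvalues_le i).trans (hA.eigenvalues_le_iSup i))

theorem four_mul_sub_sq_le_sq_mul_spread (hA : A.IsHermitian) (x : Fin n → ℝ) :
    4 * ((x ⬝ᵥ x) * (A *ᵥ x ⬝ᵥ A *ᵥ x) - (x ⬝ᵥ A *ᵥ x) ^ 2) ≤ ((x ⬝ᵥ x) * spread hA) ^ 2 :=
  hA.four_mul_sub_sq_le_sq_mul_sub hA.iInf_eigenvalues_le hA.eigenvalues_le_iSup x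

end Spread

section SignlessLaplacian

variable {n : ℕ} (G : SimpleGraph (Fin n)) [DecidableRel G.Adj]

theorem signlessLaplacian_mulVec_one :
    signlessLaplacian G *ᵥ 1 = fun i => 2 * (G.degree i : ℝ) := by
  ext i
  simp [signlessLaplacian, add_mulVec, mulVec_diagonal, two_mul]

theorem one_dotProduct_signlessLaplacian_mulVec_one :
    1 ⬝ᵥ signlessLaplacian G *ᵥ 1 = 4 * (G.edgeFinset.card : ℝ) := by
  have hdeg : ∑ i, (G.degree i : ℝ) = 2 * G.edgeFinset.card := by
    exact_mod_cast G.sum_degrees_eq_twice_card_edges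
  rw [signlessLaplacian_mulVec_one, one_dotProduct, ← Finset.mul_sum, hdeg]
  ring

theorem signlessLaplacian_mulVec_one_dotProduct_self :
    signlessLaplacian G *ᵥ 1 ⬝ᵥ signlessLaplacian G *ᵥ 1 = 4 * ∑ i, (G.degree i : ℝ) ^ 2 := by
  rw [signlessLaplacian_mulVec_one, dotProduct, Finset.mul_sum]
  exact Finset.sum_congr rfl fun i _ => by ring

end SignlessLaplacian

theorem spread_Q_zagreb_lower_bound'_general {n : ℕ}
    (G : SimpleGraph (Fin n)) [DecidableRel G.Adj]
    (hQ : (signlessLaplacian G).IsHermitian) :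
    spread hQ ≥ (4 / (n : ℝ)) * Real.sqrt ((n : ℝ) * (∑ i, (G.degree i : ℝ) ^ 2)
      - 4 * (G.edgeFinset.card : ℝ) ^ 2) := by
  rcases n.eq_zero_or_pos with rfl | hn
  · simpa using spread_nonneg hQ
  have hbound := four_mul_sub_sq_le_sq_mul_spread hQ 1
  rw [signlessLaplacian_mulVec_one_dotProduct_self, one_dotProduct_signlessLaplacian_mulVec_one,
    one_dotProduct_one, Fintype.card_fin] at hbound
  have hsqrt : Real.sqrt ((n : ℝ) * (∑ i, (G.degree i : ℝ) ^ 2)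
      - 4 * (G.edgeFinset.card : ℝ) ^ 2) ≤ n * spread hQ / 4 := by
    rw [Real.sqrt_le_left (by positivity [spread_nonneg hQ])]
    linarith
  calc (4 / (n : ℝ)) * Real.sqrt ((n : ℝ) * (∑ i, (G.degree i : ℝ) ^ 2)
        - 4 * (G.edgeFinset.card : ℝ) ^ 2)
      ≤ 4 / n * (n * spread hQ / 4) := by gcongr
    _ = spread hQ := by field_simp

theorem spread_Q_zagreb_lower_bound' {n : ℕ} (hn : 1 ≤ n)
    (G : SimpleGraph (Fin n)) [DecidableRel G.Adj]
    (hQ : (signlessLaplacian G).IsHermitian) :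
    spread hQ ≥ (4 / (n : ℝ)) * Real.sqrt ((n : ℝ) * (∑ i, (G.degree i : ℝ) ^ 2)
      - 4 * (G.edgeFinset.card : ℝ) ^ 2) :=
  spread_Q_zagreb_lower_bound'_general G hQ
end

section
/- Let G be a simple graph with n ≥ 1 vertices and m edges. Then s_Q(G) ≤ sqrt(2·M₁(G) + 4m - 8m²/n), where M₁(G) = Σᵢ dᵢ² and s_Q(G) is the signless Laplacian spread. -/
open Matrix

/-!
Mirsky's argument: if `λ₁ ≥ ⋯ ≥ λₙ` are the eigenvalues of `Q` and `t = (∑ λᵢ) / n` is their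
mean, then `(λ₁ - λₙ)² ≤ 2 (λ₁ - t)² + 2 (λₙ - t)² ≤ 2 ∑ (λᵢ - t)² = 2 ∑ λᵢ² - 2 (∑ λᵢ)² / n`.
The power sums of the eigenvalues are `tr Q = ∑ dᵢ = 2m` and `tr Q² = ∑ dᵢ² + tr A² = M₁ + 2m`.
-/

section Variance

variable {ι : Type*} [Fintype ι]

theorem sum_sub_mean_sq (f : ι → ℝ) :
    ∑ i, (f i - (∑ j, f j) / Fintype.card ι) ^ 2
      = ∑ i, f i ^ 2 - (∑ i, f i) ^ 2 / Fintype.card ι := by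
  set N : ℝ := (Fintype.card ι : ℝ)
  have expand (t : ℝ) : ∑ i, (f i - t) ^ 2 = ∑ i, f i ^ 2 - 2 * t * ∑ i, f i + N * t ^ 2 := by
    simp only [sub_sq, Finset.sum_add_distrib, Finset.sum_sub_distrib, ← Finset.sum_mul,
      ← Finset.mul_sum, Finset.sum_const, Finset.card_univ, nsmul_eq_mul, N]
    ring
  rcases eq_or_ne N 0 with hN | hN
  · simp [hN]
  · rw [expand]
    field_simp
    ring

theorem sq_iSup_sub_iInf_le_two_mul_sum_sq_sub (f : ι → ℝ) (c : ℝ) :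
    ((⨆ i, f i) - ⨅ i, f i) ^ 2 ≤ 2 * ∑ i, (f i - c) ^ 2 := by
  classical
  have sum_nonneg : 0 ≤ ∑ i, (f i - c) ^ 2 := by positivity
  cases isEmpty_or_nonempty ι
  · simp [Real.iSup_of_isEmpty, Real.iInf_of_isEmpty]
  obtain ⟨i, hi⟩ := exists_eq_ciSup_of_finite (f := f)
  obtain ⟨j, hj⟩ := exists_eq_ciInf_of_finite (f := f)
  rw [← hi, ← hj]
  rcases eq_or_ne i j with rfl | hij
  · simpa using sum_nonneg
  have pair_le : (f i - c) ^ 2 + (f j - c) ^ 2 ≤ ∑ k, (f k - c) ^ 2 := by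
    calc (f i - c) ^ 2 + (f j - c) ^ 2 = ∑ k ∈ {i, j}, (f k - c) ^ 2 :=
          (Finset.sum_pair (f := fun k => (f k - c) ^ 2) hij).symm
      _ ≤ ∑ k, (f k - c) ^ 2 := Finset.sum_le_sum_of_subset_of_nonneg (Finset.subset_univ _)
          fun k _ _ => sq_nonneg (f k - c)
  nlinarith [sq_nonneg (f i + f j - 2 * c)]

theorem sq_iSup_sub_iInf_le (f : ι → ℝ) :
    ((⨆ i, f i) - ⨅ i, f i) ^ 2
      ≤ 2 * ∑ i, f i ^ 2 - 2 / Fintype.card ι * (∑ i, f i) ^ 2 := by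
  calc ((⨆ i, f i) - ⨅ i, f i) ^ 2
      ≤ 2 * ∑ i, (f i - (∑ j, f j) / Fintype.card ι) ^ 2 :=
        sq_iSup_sub_iInf_le_two_mul_sum_sq_sub f _
    _ = 2 * ∑ i, f i ^ 2 - 2 / Fintype.card ι * (∑ i, f i) ^ 2 := by
        rw [sum_sub_mean_sq]
        ring

end Variance

theorem Matrix.IsHermitian.trace_mul_self_eq_sum_sq_eigenvalues {𝕜 ι : Type*} [RCLike 𝕜]
    [Fintype ι] [DecidableEq ι] {A : Matrix ι ι 𝕜} (hA : A.IsHermitian) :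
    (A * A).trace = ∑ i, (hA.eigenvalues i : 𝕜) ^ 2 := by
  conv_lhs => rw [hA.spectral_theorem, ← map_mul, Unitary.conjStarAlgAut_apply, trace_mul_cycle,
    Unitary.coe_star_mul_self, one_mul, diagonal_mul_diagonal, trace_diagonal]
  simp [sq]

theorem spread_sq_le {n : ℕ} {A : Matrix (Fin n) (Fin n) ℝ} (hA : A.IsHermitian) :
    spread hA ^ 2 ≤ 2 * (A * A).trace - 2 / n * A.trace ^ 2 := by
  rw [hA.trace_eq_sum_eigenvalues, hA.trace_mul_self_eq_sum_sq_eigenvalues]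
  simpa [spread] using sq_iSup_sub_iInf_le hA.eigenvalues

section SignlessLaplacian

variable {n : ℕ} (G : SimpleGraph (Fin n)) [DecidableRel G.Adj]

theorem SimpleGraph.sum_degrees_eq_twice_card_edges_real :
    ∑ i, (G.degree i : ℝ) = 2 * (G.edgeFinset.card : ℝ) := by
  exact_mod_cast G.sum_degrees_eq_twice_card_edges

theorem trace_signlessLaplacian : (signlessLaplacian G).trace = 2 * (G.edgeFinset.card : ℝ) := by
  simp [signlessLaplacian, trace_diagonal, G.sum_degrees_eq_twice_card_edges_real]

theorem trace_signlessLaplacian_mul_self :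
    (signlessLaplacian G * signlessLaplacian G).trace
      = ∑ i, (G.degree i : ℝ) ^ 2 + 2 * (G.edgeFinset.card : ℝ) := by
  have trace_degree_mul_adj :
      (diagonal (fun i => (G.degree i : ℝ)) * G.adjMatrix ℝ).trace = 0 := by
    simp only [trace, diag_apply, diagonal_mul, SimpleGraph.adjMatrix_apply, G.irrefl, if_false,
      mul_zero, Finset.sum_const_zero]
  have trace_adj_mul_degree :
      (G.adjMatrix ℝ * diagonal (fun i => (G.degree i : ℝ))).trace = 0 := by
    simp only [trace, diag_apply, mul_diagonal, SimpleGraph.adjMatrix_apply, G.irrefl, if_false,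
      zero_mul, Finset.sum_const_zero]
  have trace_adj_mul_adj : (G.adjMatrix ℝ * G.adjMatrix ℝ).trace = ∑ i, (G.degree i : ℝ) := by
    simp only [trace, diag_apply, SimpleGraph.adjMatrix_mul_self_apply_self]
  rw [signlessLaplacian, add_mul, mul_add, mul_add, trace_add, trace_add, trace_add,
    diagonal_mul_diagonal, trace_diagonal, trace_degree_mul_adj, trace_adj_mul_degree,
    trace_adj_mul_adj, G.sum_degrees_eq_twice_card_edges_real]
  simp only [sq, add_zero, zero_add]

end SignlessLaplacian

theorem spread_Q_upper_bound_general {n : ℕ}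
    (G : SimpleGraph (Fin n)) [DecidableRel G.Adj]
    (hQ : (signlessLaplacian G).IsHermitian) :
    spread hQ ≤ Real.sqrt (2 * (∑ i, (G.degree i : ℝ) ^ 2)
      + 4 * (G.edgeFinset.card : ℝ) - 8 * (G.edgeFinset.card : ℝ) ^ 2 / n) := by
  have mirsky := spread_sq_le hQ
  rw [trace_signlessLaplacian, trace_signlessLaplacian_mul_self] at mirsky
  refine (le_abs_self _).trans (Real.abs_le_sqrt (mirsky.trans_eq ?_))
  ring

theorem spread_Q_upper_bound {n : ℕ} (hn : 1 ≤ n)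
    (G : SimpleGraph (Fin n)) [DecidableRel G.Adj]
    (hQ : (signlessLaplacian G).IsHermitian) :
    spread hQ ≤ Real.sqrt (2 * (∑ i, (G.degree i : ℝ) ^ 2)
      + 4 * (G.edgeFinset.card : ℝ) - 8 * (G.edgeFinset.card : ℝ) ^ 2 / n) :=
  spread_Q_upper_bound_general G hQ
end
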